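/- Narrowing for algorithmic subtyping: if Γ₁, X<:Q, Γ₂ ⊢ M <: N and Γ₁ ⊢ P <: Q are derivable, then Γ₁, X<:P, Γ₂ ⊢ M <: N is derivable. -/

import Mathlib

inductive Ty where
  | var : ℕ → Ty
  | top : Ty
  | arrow : Ty → Ty → Ty
  | all : ℕ → Ty → Ty → Ty

abbrev Env := List (ℕ × Ty)

def freeVars : Ty → Finset ℕ
  | .var x => {x}
  | .top => ∅
  | .arrow a b => freeVars a ∪ freeVars b
  | .all x a b => freeVars a ∪ (freeVars b \ {x})

def boundVars (Γ : Env) : Finset ℕ := (Γ.map Prod.fst).toFinset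

/-- A type is well-scoped in Γ if all its free variables are bound in Γ. -/
def WellScoped (Γ : Env) (t : Ty) : Prop := freeVars t ⊆ boundVars Γ

/-- The original algorithmic subtyping system for F<:. -/
inductive Subty : Env → Ty → Ty → Prop where
  | top {Γ S} : WellScoped Γ S → Subty Γ S .top
  | refl {Γ X} : X ∈ boundVars Γ → Subty Γ (.var X) (.var X)
  | trans_tvar {Γ X U T} : (X, U) ∈ Γ → Subty Γ U T → Subty Γ (.var X) T
  | arrow {Γ S₁ S₂ T₁ T₂} : Subty Γ T₁ S₁ → Subty Γ S₂ T₂ →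
      Subty Γ (.arrow S₁ S₂) (.arrow T₁ T₂)
  | all {Γ X S₁ S₂ T₁ T₂} : Subty Γ T₁ S₁ → Subty ((X, T₁) :: Γ) S₂ T₂ →
      Subty Γ (.all X S₁ S₂) (.all X T₁ T₂)


/-!
Narrowing and transitivity are proved together by induction on the middle type `Q`.
Narrowing at `Q` only needs transitivity at `Q`: the one rule that looks up the bound of `X`
is `SA-Trans-TVar`, and there the new premise `P <: Q` is composed with the old one `Q <: N`.
Transitivity at `Q` is an induction on the derivation of `M <: Q`; in the `∀` case the body of
the left derivation lives under the bound `Q₁` and must be narrowed to the bound `T₁` of the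
right one, which is where narrowing at the smaller type `Q₁` is used.
-/

lemma mem_boundVars {Γ : Env} {x : ℕ} : x ∈ boundVars Γ ↔ ∃ u, (x, u) ∈ Γ := by
  simp [boundVars]

lemma boundVars_mono {Γ Γ' : Env} (h : Γ ⊆ Γ') : boundVars Γ ⊆ boundVars Γ' := by
  intro x
  simp only [mem_boundVars]
  exact fun ⟨u, hu⟩ => ⟨u, h hu⟩

lemma boundVars_cons (x : ℕ) (t : Ty) (Γ : Env) :
    boundVars ((x, t) :: Γ) = insert x (boundVars Γ) := by
  simp [boundVars]

lemma boundVars_append_cons (Γ₁ Γ₂ : Env) (X : ℕ) (P Q : Ty) :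
    boundVars (Γ₂ ++ (X, P) :: Γ₁) = boundVars (Γ₂ ++ (X, Q) :: Γ₁) := by
  simp [boundVars]

lemma WellScoped.of_cons {Γ : Env} {X : ℕ} {U t : Ty} (h : WellScoped ((X, U) :: Γ) t) :
    freeVars t \ {X} ⊆ boundVars Γ := by
  rw [WellScoped, boundVars_cons, Finset.insert_eq] at h
  exact sdiff_le_iff.mpr h

def TransAt (Q : Ty) : Prop :=
  ∀ Γ M N, Subty Γ M Q → Subty Γ Q N → Subty Γ M N

namespace Subty

lemma mono {Γ Γ' : Env} {M N : Ty} (h : Subty Γ M N) (hsub : Γ ⊆ Γ') : Subty Γ' M N := by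
  induction h generalizing Γ' with
  | top hws => exact .top (hws.trans (boundVars_mono hsub))
  | refl hx => exact .refl (boundVars_mono hsub hx)
  | trans_tvar hm _ ih => exact .trans_tvar (hsub hm) (ih hsub)
  | arrow _ _ ih₁ ih₂ => exact .arrow (ih₁ hsub) (ih₂ hsub)
  | all _ _ ih₁ ih₂ => exact .all (ih₁ hsub) (ih₂ (List.cons_subset_cons _ hsub))

lemma wellScoped {Γ : Env} {M N : Ty} (h : Subty Γ M N) :
    WellScoped Γ M ∧ WellScoped Γ N := by
  induction h with
  | top hws => exact ⟨hws, by simp [WellScoped, freeVars]⟩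
  | refl hx => simpa [WellScoped, freeVars] using hx
  | trans_tvar hm _ ih =>
      refine ⟨?_, ih.2⟩
      simpa [WellScoped, freeVars] using mem_boundVars.mpr ⟨_, hm⟩
  | arrow _ _ ih₁ ih₂ =>
      simp only [WellScoped, freeVars, Finset.union_subset_iff]
      exact ⟨⟨ih₁.2, ih₂.1⟩, ⟨ih₁.1, ih₂.2⟩⟩
  | all _ _ ih₁ ih₂ =>
      simp only [WellScoped, freeVars, Finset.union_subset_iff]
      exact ⟨⟨ih₁.2, ih₂.1.of_cons⟩, ⟨ih₁.1, ih₂.2.of_cons⟩⟩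

lemma narrow {Γ₁ Γ₂ : Env} {X : ℕ} {P Q M N : Ty} (htrans : TransAt Q)
    (h : Subty (Γ₂ ++ (X, Q) :: Γ₁) M N) (hPQ : Subty Γ₁ P Q) :
    Subty (Γ₂ ++ (X, P) :: Γ₁) M N := by
  generalize hΓ : Γ₂ ++ (X, Q) :: Γ₁ = Γ at h
  induction h generalizing Γ₂ with subst hΓ
  | top hws => exact .top (by rwa [WellScoped, boundVars_append_cons _ _ _ P Q])
  | refl hx => exact .refl (by rwa [boundVars_append_cons _ _ _ P Q])
  | trans_tvar hm _ ih =>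
      rw [List.mem_append, List.mem_cons] at hm
      rcases hm with hm | hm | hm
      · exact .trans_tvar (by simp [hm]) (ih rfl)
      · obtain ⟨rfl, rfl⟩ := Prod.mk.inj hm.symm
        have hP : Subty (Γ₂ ++ (X, P) :: Γ₁) P Q := hPQ.mono (by simp)
        exact .trans_tvar (by simp) (htrans _ _ _ hP (ih rfl))
      · exact .trans_tvar (by simp [hm]) (ih rfl)
  | arrow _ _ ih₁ ih₂ => exact .arrow (ih₁ rfl) (ih₂ rfl)
  | @all _ Y _ _ T₁ _ _ _ ih₁ ih₂ => exact .all (ih₁ rfl) (ih₂ (Γ₂ := (Y, T₁) :: Γ₂) rfl)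

end Subty

lemma transAt_of_sizeOf_lt (Q : Ty) (ih : ∀ Q' : Ty, sizeOf Q' < sizeOf Q → TransAt Q') :
    TransAt Q := by
  intro Γ M N hMQ hQN
  induction hMQ generalizing N with
  | top hws =>
      cases hQN with
      | top => exact .top hws
  | refl => exact hQN
  | trans_tvar hm _ ihU => exact .trans_tvar hm (ihU ih N hQN)
  | @arrow _ _ _ Q₁ Q₂ h₁ h₂ =>
      cases hQN with
      | top => exact .top (Subty.arrow h₁ h₂).wellScoped.1
      | arrow hN₁ hN₂ =>
          have trans₁ : TransAt Q₁ := ih Q₁ (by simp only [Ty.arrow.sizeOf_spec]; omega)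
          have trans₂ : TransAt Q₂ := ih Q₂ (by simp only [Ty.arrow.sizeOf_spec]; omega)
          exact .arrow (trans₁ _ _ _ hN₁ h₁) (trans₂ _ _ _ h₂ hN₂)
  | @all Γ Y _ _ Q₁ Q₂ h₁ h₂ =>
      cases hQN with
      | top => exact .top (Subty.all h₁ h₂).wellScoped.1
      | @all _ _ _ _ T₁ _ hN₁ hN₂ =>
          have trans₁ : TransAt Q₁ := ih Q₁ (by simp only [Ty.all.sizeOf_spec]; omega)
          have trans₂ : TransAt Q₂ := ih Q₂ (by simp only [Ty.all.sizeOf_spec]; omega)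
          have h₂' : Subty ((Y, T₁) :: Γ) _ Q₂ := Subty.narrow (Γ₂ := []) trans₁ h₂ hN₁
          exact .all (trans₁ _ _ _ hN₁ h₁) (trans₂ _ _ _ h₂' hN₂)

theorem transAt (Q : Ty) : TransAt Q :=
  (measure sizeOf).wf.induction Q transAt_of_sizeOf_lt

theorem sub_narrowing (Γ₁ Γ₂ : Env) (X : ℕ) (P Q M N : Ty)
    (h1 : Subty (Γ₂ ++ (X, Q) :: Γ₁) M N) (h2 : Subty Γ₁ P Q) :
    Subty (Γ₂ ++ (X, P) :: Γ₁) M N :=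
  Subty.narrow (transAt Q) h1 h2
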